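/- Let x_1,…,x_N ∈ ℝⁿ be nonzero vectors, r_x = min_t ‖x_t‖₂ > 0, and let y_t = x_tᵀθ° + v_t for t = 1,…,N with θ° ∈ ℝⁿ. Let ε ≥ 0, I_ε^0 = {t : |v_t| ≤ ε}, and let ℓ : ℝ → [0,∞) satisfy properties P1–P4 with constant α_ℓ > 0. Let γ > 0 and α ∈ (0,1], and assume the stability condition ρ_α(X)/(1 + e^{−γℓ(ε)}) + e^{−γℓ(ε)}·|I_ε^0|/N > 1. Then for any maximizer θ* over ℝⁿ of θ ↦ ∑_{k=1}^N exp(−γℓ(y_k − x_kᵀθ)), it holds that ℓ(α·r_x·‖θ* − θ°‖₂) ≤ (1/(γ·α_ℓ))·ln(1/μ_ℓ), where μ_ℓ = [(1+e^{−γℓ(ε)})/(|I_ε^0|/N + ρ_α(X) − 1)]·[ρ_α(X)/(1+e^{−γℓ(ε)}) + e^{−γℓ(ε)}·|I_ε^0|/N − 1]. -/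

import Mathlib

open scoped BigOperators

noncomputable section

/-- Euclidean dot product on `ℝⁿ`. -/
def dotR {n : ℕ} (u v : Fin n → ℝ) : ℝ := ∑ i, u i * v i

/-- Euclidean 2-norm on `ℝⁿ`. -/
def nrm {n : ℕ} (v : Fin n → ℝ) : ℝ := Real.sqrt (∑ i, v i ^ 2)

/-- The index set `𝓘_α(X,η) = {t : |x_tᵀη| ≥ α‖x_t‖₂‖η‖₂}`. -/
def Iset {n N : ℕ} (x : Fin N → Fin n → ℝ) (a : ℝ) (η : Fin n → ℝ) : Finset (Fin N) :=
  Finset.univ.filter fun t => a * nrm (x t) * nrm η ≤ |dotR (x t) η|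

/-- The correlation measure `ρ_α(X) = (1/N)·inf_{η ≠ 0} |𝓘_α(X,η)|`. -/
def rhoX {n N : ℕ} (x : Fin N → Fin n → ℝ) (a : ℝ) : ℝ :=
  (1 / N) * sInf ((fun η : Fin n → ℝ => ((Iset x a η).card : ℝ)) '' {η | η ≠ 0})

/-- The constant `μ` as a function of `s = e^{-γℓ(ε)}`, `q = |I_ε^0|/N` and `ρ = ρ_α(X)`. -/
def muVal (s q ρ : ℝ) : ℝ := (1 + s) / (q + ρ - 1) * (ρ / (1 + s) + s * q - 1)

/-! Compare the objective `F(θ) = ∑ₖ exp(-γ ℓ(yₖ - xₖᵀθ))` at `θ*` and at `θ°`. At `θ°` every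
index of `I_ε^0` contributes at least `s = e^{-γℓ(ε)}`. At `θ*`, with `δ = θ* - θ°`, an index of
`𝓘_α(X,δ) ∩ I_ε^0` has residual `v_t - x_tᵀδ`, whose loss is by P3–P4 at least
`α_ℓ L - ℓ(ε)` with `L = ℓ(α r_x ‖δ‖₂)`, so its term is at most `e^{-γα_ℓ L}/s`; every other term
is at most `1`. The intersection has at least `(|I_ε^0|/N + ρ_α(X) - 1) N` elements, and
`F(θ°) ≤ F(θ*)` then forces `μ_ℓ ≤ e^{-γα_ℓ L}`. -/

lemma dotR_sub {n : ℕ} (u v w : Fin n → ℝ) : dotR u (v - w) = dotR u v - dotR u w := by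
  simp only [dotR, Pi.sub_apply, mul_sub, Finset.sum_sub_distrib]

section Correlation

variable {n N : ℕ} (x : Fin N → Fin n → ℝ) (a : ℝ)

lemma Iset_zero : Iset x a 0 = Finset.univ := by
  ext t
  simp [Iset, nrm, dotR]

lemma rhoX_le_one : rhoX x a ≤ 1 := by
  set S := (fun η : Fin n → ℝ => ((Iset x a η).card : ℝ)) '' {η | η ≠ 0}
  have hS : sInf S ≤ N := by
    rcases S.eq_empty_or_nonempty with hS | ⟨_, η, hη, rfl⟩
    · rw [hS, Real.sInf_empty]
      positivity
    · refine csInf_le_of_le ⟨0, ?_⟩ ⟨η, hη, rfl⟩ ?_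
      · rintro _ ⟨_, _, rfl⟩
        positivity
      · simpa using Finset.card_le_univ (Iset x a η)
  rcases Nat.eq_zero_or_pos N with rfl | hN
  · simp [rhoX]
  · rw [rhoX, one_div, inv_mul_le_iff₀ (by positivity), mul_one]
    exact hS

lemma rhoX_mul_le_card (η : Fin n → ℝ) : rhoX x a * N ≤ (Iset x a η).card := by
  by_cases hη : η = 0
  · rw [hη, Iset_zero, Finset.card_univ, Fintype.card_fin]
    exact mul_le_of_le_one_left (Nat.cast_nonneg N) (rhoX_le_one x a)
  rcases Nat.eq_zero_or_pos N with rfl | hN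
  · simp [rhoX]
  rw [rhoX, mul_comm, ← mul_assoc, one_div, mul_inv_cancel₀ (by positivity), one_mul]
  refine csInf_le ⟨0, ?_⟩ ⟨η, hη, rfl⟩
  rintro _ ⟨_, _, rfl⟩
  positivity

lemma abs_le_abs_dotR_of_mem_Iset {a r : ℝ} (ha : 0 ≤ a) (hr : 0 ≤ r) {η : Fin n → ℝ}
    {t : Fin N} (hrt : r ≤ nrm (x t)) (ht : t ∈ Iset x a η) :
    |a * r * nrm η| ≤ |dotR (x t) η| := by
  have hη : 0 ≤ nrm η := Real.sqrt_nonneg _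
  rw [abs_of_nonneg (by positivity)]
  calc a * r * nrm η ≤ a * nrm (x t) * nrm η := by gcongr
    _ ≤ |dotR (x t) η| := (Finset.mem_filter.mp ht).2

end Correlation

lemma card_add_card_le_card_inter_add {N : ℕ} (A B : Finset (Fin N)) :
    (A.card : ℝ) + B.card ≤ (A ∩ B).card + N := by
  have h := Finset.card_union_add_card_inter A B
  have hU : (A ∪ B).card ≤ N := by simpa using Finset.card_le_univ (A ∪ B)
  exact_mod_cast (by omega : A.card + B.card ≤ (A ∩ B).card + N)

lemma sum_le_card_mul_add_card_sub {ι : Type*} [Fintype ι] [DecidableEq ι] {f : ι → ℝ}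
    {T : Finset ι} {B : ℝ} (hf : ∀ i, f i ≤ 1) (hT : ∀ i ∈ T, f i ≤ B) :
    ∑ i, f i ≤ T.card * B + (Fintype.card ι - T.card) := by
  rw [← Finset.sum_add_sum_compl T f]
  have hT' := Finset.sum_le_card_nsmul T f B hT
  have hTc := Finset.sum_le_card_nsmul Tᶜ f 1 fun i _ => hf i
  rw [nsmul_eq_mul] at hT'
  rw [nsmul_eq_mul, Finset.card_compl, Nat.cast_sub (Finset.card_le_univ T), mul_one] at hTc
  linarith

section Loss

variable {ℓ : ℝ → ℝ}

lemma exp_neg_mul_loss_le_one (hP1 : ∀ a, 0 ≤ ℓ a) {γ : ℝ} (hγ : 0 ≤ γ) (b : ℝ) :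
    Real.exp (-(γ * ℓ b)) ≤ 1 :=
  Real.exp_le_one_iff.mpr (neg_nonpos.mpr (mul_nonneg hγ (hP1 b)))

lemma loss_sub_ge (hP2 : ∀ a, ℓ (-a) = ℓ a) (hP3 : ∀ a b, |a| ≤ |b| → ℓ a ≤ ℓ b)
    {αl : ℝ} (hP4 : ∀ a b, αl * ℓ a - ℓ b ≤ ℓ (a - b)) (hαl : 0 ≤ αl)
    {c d u e : ℝ} (hcd : |c| ≤ |d|) (hue : |u| ≤ |e|) :
    αl * ℓ c - ℓ e ≤ ℓ (u - d) := by
  have hc := mul_le_mul_of_nonneg_left (hP3 c d hcd) hαl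
  have hu := hP3 u e hue
  rw [← hP2 (u - d), neg_sub]
  linarith [hP4 d u]

end Loss

section Constant

variable {s q ρ : ℝ}

lemma add_sub_one_pos_of_stability (hs : 0 < s) (hs1 : s ≤ 1) (hq0 : 0 ≤ q) (hq1 : q ≤ 1)
    (hstab : 1 < ρ / (1 + s) + s * q) : 0 < q + ρ - 1 := by
  have hρ : (1 - s * q) * (1 + s) < ρ := by
    rw [← lt_div_iff₀ (by linarith)]
    linarith
  nlinarith [mul_nonneg (mul_nonneg hs.le hs.le) (sub_nonneg.mpr hq1),
    mul_nonneg (sub_nonneg.mpr hs1) (add_nonneg hq0 hs.le)]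

lemma muVal_eq (hs : 0 < s) : muVal s q ρ = (ρ + (1 + s) * (s * q - 1)) / (q + ρ - 1) := by
  rw [muVal, div_mul_eq_mul_div, add_sub_assoc, mul_add, mul_div_cancel₀ _ (by positivity)]

lemma muVal_pos (hs : 0 < s) (hs1 : s ≤ 1) (hq0 : 0 ≤ q) (hq1 : q ≤ 1)
    (hstab : 1 < ρ / (1 + s) + s * q) : 0 < muVal s q ρ :=
  mul_pos (div_pos (by linarith) (add_sub_one_pos_of_stability hs hs1 hq0 hq1 hstab)) (by linarith)

/-- `p` is the fraction of indices whose objective term is at most `w`, all others being at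
most `1`. -/
lemma muVal_le_mul (hs : 0 < s) (hs1 : s ≤ 1) (hq0 : 0 ≤ q) (hq1 : q ≤ 1) (hρ1 : ρ ≤ 1)
    (hstab : 1 < ρ / (1 + s) + s * q) {p w : ℝ} (hp : q + ρ - 1 ≤ p)
    (hw : q * s ≤ p * w + (1 - p)) : muVal s q ρ ≤ s * w := by
  have hD := add_sub_one_pos_of_stability hs hs1 hq0 hq1 hstab
  have hqs : q * s ≤ 1 := by nlinarith
  have hDw : (q + ρ - 1) * (1 - w) ≤ 1 - q * s := by
    rcases le_total 0 (1 - w) with hw1 | hw1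
    · nlinarith
    · nlinarith
  rw [muVal_eq hs, div_le_iff₀ hD]
  nlinarith [mul_nonneg (sub_nonneg.mpr hs1) (sub_nonneg.mpr hρ1)]

end Constant

section Objective

variable {n N : ℕ} (x : Fin N → Fin n → ℝ) {ℓ : ℝ → ℝ} {γ : ℝ}

lemma card_mul_exp_le_sum_exp (hP3 : ∀ a b, |a| ≤ |b| → ℓ a ≤ ℓ b) (hγ : 0 ≤ γ)
    (v : Fin N → ℝ) (ε : ℝ) :
    ((Finset.univ.filter fun t => |v t| ≤ ε).card : ℝ) * Real.exp (-(γ * ℓ ε)) ≤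
      ∑ k, Real.exp (-(γ * ℓ (v k))) := by
  rw [← nsmul_eq_mul]
  refine (Finset.card_nsmul_le_sum _ _ _ fun k hk => ?_).trans
    (Finset.sum_le_univ_sum_of_nonneg fun k => (Real.exp_pos _).le)
  have hvk := (Finset.mem_filter.mp hk).2.trans (le_abs_self ε)
  exact Real.exp_le_exp.mpr (neg_le_neg (mul_le_mul_of_nonneg_left (hP3 _ _ hvk) hγ))

lemma sum_exp_le_card_inter (hP1 : ∀ a, 0 ≤ ℓ a) (hP2 : ∀ a, ℓ (-a) = ℓ a)
    (hP3 : ∀ a b, |a| ≤ |b| → ℓ a ≤ ℓ b) {αl : ℝ} (hP4 : ∀ a b, αl * ℓ a - ℓ b ≤ ℓ (a - b))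
    (hαl : 0 ≤ αl) (hγ : 0 ≤ γ) {a : ℝ} (ha : 0 ≤ a) (v : Fin N → ℝ) (δ : Fin n → ℝ) (ε : ℝ) :
    ∑ k, Real.exp (-(γ * ℓ (v k - dotR (x k) δ))) ≤
      (Iset x a δ ∩ Finset.univ.filter fun t => |v t| ≤ ε).card *
          (Real.exp (-(γ * αl * ℓ (a * (⨅ t, nrm (x t)) * nrm δ))) / Real.exp (-(γ * ℓ ε))) +
        (N - (Iset x a δ ∩ Finset.univ.filter fun t => |v t| ≤ ε).card) := by
  have hr0 : 0 ≤ ⨅ t, nrm (x t) := Real.iInf_nonneg fun t => Real.sqrt_nonneg _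
  have hr : ∀ t, ⨅ t, nrm (x t) ≤ nrm (x t) := ciInf_le (Finite.bddBelow_range _)
  simpa using sum_le_card_mul_add_card_sub (T := Iset x a δ ∩ _)
    (fun k => exp_neg_mul_loss_le_one hP1 hγ _) fun k hk => by
      obtain ⟨hkI, hk0⟩ := Finset.mem_inter.mp hk
      have hloss := loss_sub_ge hP2 hP3 hP4 hαl
        (abs_le_abs_dotR_of_mem_Iset x ha hr0 (hr k) hkI)
        ((Finset.mem_filter.mp hk0).2.trans (le_abs_self ε))
      rw [← Real.exp_sub]
      exact Real.exp_le_exp.mpr (by nlinarith)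

end Objective

lemma le_one_div_mul_log_one_div_of_le_exp {c μ L : ℝ} (hc : 0 < c) (hμ : 0 < μ)
    (h : μ ≤ Real.exp (-(c * L))) : L ≤ 1 / c * Real.log (1 / μ) := by
  have hlog : Real.log μ ≤ -(c * L) := (Real.log_le_iff_le_exp hμ).mpr h
  rw [one_div_mul_eq_div, le_div_iff₀ hc, one_div, Real.log_inv]
  linarith

theorem mce_main_theorem_general {n N : ℕ} (hN : 0 < N)
    (x : Fin N → Fin n → ℝ)
    (θo : Fin n → ℝ) (v y : Fin N → ℝ)
    (hy : ∀ t, y t = dotR (x t) θo + v t)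
    (ε : ℝ)
    (ℓ : ℝ → ℝ) (αl : ℝ) (hαl : 0 < αl)
    (hP1 : ∀ a, 0 ≤ ℓ a)
    (hP2 : ∀ a, ℓ (-a) = ℓ a)
    (hP3 : ∀ a b, |a| ≤ |b| → ℓ a ≤ ℓ b)
    (hP4 : ∀ a b, αl * ℓ a - ℓ b ≤ ℓ (a - b))
    (γ : ℝ) (hγ : 0 < γ) (a : ℝ) (ha : 0 < a)
    (hstab : 1 <
      rhoX x a / (1 + Real.exp (-(γ * ℓ ε))) +
        Real.exp (-(γ * ℓ ε)) *
          (((Finset.univ.filter fun t => |v t| ≤ ε).card : ℝ) / N))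
    (θs : Fin n → ℝ)
    (hmax : ∀ θ : Fin n → ℝ,
      ∑ k, Real.exp (-(γ * ℓ (y k - dotR (x k) θ))) ≤
        ∑ k, Real.exp (-(γ * ℓ (y k - dotR (x k) θs)))) :
    ℓ (a * (⨅ t, nrm (x t)) * nrm (θs - θo)) ≤
      (1 / (γ * αl)) *
        Real.log (1 /
          muVal (Real.exp (-(γ * ℓ ε)))
            (((Finset.univ.filter fun t => |v t| ≤ ε).card : ℝ) / N)
            (rhoX x a)) := by
  set s := Real.exp (-(γ * ℓ ε))
  set I0 := Finset.univ.filter fun t => |v t| ≤ ε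
  set T := Iset x a (θs - θo) ∩ I0
  set w := Real.exp (-(γ * αl * ℓ (a * (⨅ t, nrm (x t)) * nrm (θs - θo)))) / s
  have hNR : (0 : ℝ) < N := Nat.cast_pos.mpr hN
  have hs : 0 < s := Real.exp_pos _
  have hs1 : s ≤ 1 := exp_neg_mul_loss_le_one hP1 hγ.le ε
  have hq0 : (0 : ℝ) ≤ I0.card / N := by positivity
  have hq1 : (I0.card : ℝ) / N ≤ 1 := by
    rw [div_le_one hNR]
    simpa using Finset.card_le_univ I0
  have hcount : (I0.card : ℝ) * s ≤ T.card * w + (N - T.card) :=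
    calc (I0.card : ℝ) * s ≤ ∑ k, Real.exp (-(γ * ℓ (v k))) :=
          card_mul_exp_le_sum_exp hP3 hγ.le v ε
      _ = ∑ k, Real.exp (-(γ * ℓ (y k - dotR (x k) θo))) := by simp_rw [hy, add_sub_cancel_left]
      _ ≤ ∑ k, Real.exp (-(γ * ℓ (y k - dotR (x k) θs))) := hmax θo
      _ ≤ T.card * w + (N - T.card) := by
          have hres : ∀ k, y k - dotR (x k) θs = v k - dotR (x k) (θs - θo) := fun k => by
            rw [hy, dotR_sub]; ring
          simp_rw [hres]
          exact sum_exp_le_card_inter x hP1 hP2 hP3 hP4 hαl.le hγ.le ha.le v (θs - θo) ε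
  have hT : I0.card / N + rhoX x a - 1 ≤ T.card / N := by
    rw [le_div_iff₀ hNR]
    linarith [card_add_card_le_card_inter_add (Iset x a (θs - θo)) I0,
      rhoX_mul_le_card x a (θs - θo), div_mul_cancel₀ (I0.card : ℝ) hNR.ne']
  have hw : I0.card / N * s ≤ T.card / N * w + (1 - T.card / N) := by
    field_simp
    linarith
  refine le_one_div_mul_log_one_div_of_le_exp (mul_pos hγ hαl)
    (muVal_pos hs hs1 hq0 hq1 (by linarith)) ?_
  simpa only [w, mul_div_cancel₀ _ hs.ne'] using
    muVal_le_mul hs hs1 hq0 hq1 (rhoX_le_one x a) (by linarith) hT hw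

/-- the main theorem, bounding `ℓ(α r_x ‖θ* − θ°‖₂)`. -/
theorem mce_main_theorem {n N : ℕ} (hN : 0 < N)
    (x : Fin N → Fin n → ℝ) (hx : ∀ t, x t ≠ 0)
    (θo : Fin n → ℝ) (v y : Fin N → ℝ)
    (hy : ∀ t, y t = dotR (x t) θo + v t)
    (ε : ℝ) (hε : 0 ≤ ε)
    (ℓ : ℝ → ℝ) (αl : ℝ) (hαl : 0 < αl)
    (hP1 : ∀ a, 0 ≤ ℓ a) (hP1' : ∀ a, ℓ a = 0 ↔ a = 0)
    (hP2 : ∀ a, ℓ (-a) = ℓ a)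
    (hP3 : ∀ a b, |a| ≤ |b| → ℓ a ≤ ℓ b)
    (hP4 : ∀ a b, αl * ℓ a - ℓ b ≤ ℓ (a - b))
    (γ : ℝ) (hγ : 0 < γ) (a : ℝ) (ha : 0 < a) (ha1 : a ≤ 1)
    (hstab : 1 <
      rhoX x a / (1 + Real.exp (-(γ * ℓ ε))) +
        Real.exp (-(γ * ℓ ε)) *
          (((Finset.univ.filter fun t => |v t| ≤ ε).card : ℝ) / N))
    (θs : Fin n → ℝ)
    (hmax : ∀ θ : Fin n → ℝ,
      ∑ k, Real.exp (-(γ * ℓ (y k - dotR (x k) θ))) ≤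
        ∑ k, Real.exp (-(γ * ℓ (y k - dotR (x k) θs)))) :
    ℓ (a * (⨅ t, nrm (x t)) * nrm (θs - θo)) ≤
      (1 / (γ * αl)) *
        Real.log (1 /
          muVal (Real.exp (-(γ * ℓ ε)))
            (((Finset.univ.filter fun t => |v t| ≤ ε).card : ℝ) / N)
            (rhoX x a)) :=
  mce_main_theorem_general hN x θo v y hy ε ℓ αl hαl hP1 hP2 hP3 hP4 γ hγ a ha hstab θs hmax
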